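/- Let n = km > 1 be a spoof odd perfect number with m composite. If m < k, then 131/45 ≤ (m+1)/m + σ(k)/k < 3 and 3 < 11/3 ≤ (m+1)/k + σ(k)/m. -/

import Mathlib

/-!
Since `m` and `m + 1` are coprime, the spoof equation forces `2k = (m + 1)c` and `σ(k) = cm` for
some `c`. Hence `σ(k)/k = 2m/(m + 1)`, `(m + 1)/k = 2/c` and `σ(k)/m = c`, so the first sum is
`3 - (m - 1)/(m(m + 1))` and the second is `c + 2/c`. An odd composite `m` is at least `9`, and
`c` is odd (as `k` is) with `c ≥ 2` (as `m < k`), so `c ≥ 3`; both bounds are then attained at the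
extreme values `m = 9` and `c = 3`.
-/

open ArithmeticFunction
open scoped ArithmeticFunction.sigma

theorem Nat.nine_le_of_odd_of_not_prime {m : ℕ} (hodd : Odd m) (hm : 1 < m) (hp : ¬ m.Prime) :
    9 ≤ m := by
  have hmin_ne_two : m.minFac ≠ 2 := fun h =>
    Nat.not_even_iff_odd.mpr hodd (even_iff_two_dvd.mpr (h ▸ m.minFac_dvd))
  have hmin : 3 ≤ m.minFac := by
    have := (Nat.minFac_prime hm.ne').two_le
    omega
  calc 9 = 3 ^ 2 := rfl
    _ ≤ m.minFac ^ 2 := Nat.pow_le_pow_left hmin 2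
    _ ≤ m := Nat.minFac_sq_le_self (by omega) hp

theorem Nat.exists_two_mul_eq_and_eq_of_mul_succ_eq {s k m : ℕ} (h : s * (m + 1) = 2 * (k * m)) :
    ∃ c, 2 * k = (m + 1) * c ∧ s = c * m := by
  have hdvd : m + 1 ∣ 2 * k := by
    have : m + 1 ∣ 2 * k * m := ⟨s, by rw [mul_comm (m + 1), h, mul_assoc]⟩
    exact (Nat.coprime_self_add_left.mpr (Nat.coprime_one_left m)).dvd_of_dvd_mul_right this
  obtain ⟨c, hc⟩ := hdvd
  refine ⟨c, hc, Nat.eq_of_mul_eq_mul_right m.add_one_pos ?_⟩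
  rw [h, ← mul_assoc, hc]
  ring

theorem Nat.three_le_of_two_mul_eq_succ_mul {k m c : ℕ} (hk : Odd k) (hm : Odd m)
    (hc : 2 * k = (m + 1) * c) (hlt : m < k) : 3 ≤ c := by
  obtain ⟨t, rfl⟩ := hm
  have hkc : k = (t + 1) * c := by linarith
  have hco : Odd c := (Nat.odd_mul.mp (hkc ▸ hk)).2
  have hc2 : 2 ≤ c := by nlinarith
  obtain ⟨u, rfl⟩ := hco
  omega

section OrderedField

variable {K : Type*} [Field K] [LinearOrder K] [IsStrictOrderedRing K]

theorem succ_div_add_two_mul_div_succ_eq (x : K) (hx : 0 < x) :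
    (x + 1) / x + 2 * x / (x + 1) = 3 - (x - 1) / (x * (x + 1)) := by
  field_simp
  ring

theorem succ_div_add_two_mul_div_succ_lt_three {x : K} (hx : 1 < x) :
    (x + 1) / x + 2 * x / (x + 1) < 3 := by
  rw [succ_div_add_two_mul_div_succ_eq x (by linarith)]
  have : 0 < (x - 1) / (x * (x + 1)) := by apply div_pos <;> nlinarith
  linarith

theorem le_succ_div_add_two_mul_div_succ {x : K} (hx : 9 ≤ x) :
    131 / 45 ≤ (x + 1) / x + 2 * x / (x + 1) := by
  have : (x - 1) / (x * (x + 1)) ≤ 4 / 45 := by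
    rw [div_le_div_iff₀ (by positivity) (by norm_num)]
    nlinarith
  rw [succ_div_add_two_mul_div_succ_eq x (by linarith)]
  linarith

theorem le_two_div_add_self {x : K} (hx : 3 ≤ x) : 11 / 3 ≤ 2 / x + x := by
  rw [div_add' _ _ _ (by positivity), le_div_iff₀ (by positivity)]
  nlinarith

end OrderedField

theorem stmt_9_general (k m : ℕ) (hm : 1 < m) (hodd : Odd (k * m))
    (hspoof : σ 1 k * (m + 1) = 2 * (k * m)) (hcomp : ¬ m.Prime) (hlt : m < k) :
    (131 : ℚ) / 45 ≤ ((m : ℚ) + 1) / (m : ℚ) + (σ 1 k : ℚ) / (k : ℚ) ∧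
      ((m : ℚ) + 1) / (m : ℚ) + (σ 1 k : ℚ) / (k : ℚ) < 3 ∧
      (11 : ℚ) / 3 ≤ ((m : ℚ) + 1) / (k : ℚ) + (σ 1 k : ℚ) / (m : ℚ) := by
  obtain ⟨hk, hmo⟩ := Nat.odd_mul.mp hodd
  obtain ⟨c, hkc, hσ⟩ := Nat.exists_two_mul_eq_and_eq_of_mul_succ_eq hspoof
  have hc : 3 ≤ c := Nat.three_le_of_two_mul_eq_succ_mul hk hmo hkc hlt
  have hm9 : (9 : ℚ) ≤ m := by exact_mod_cast Nat.nine_le_of_odd_of_not_prime hmo hm hcomp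
  have hc3 : (3 : ℚ) ≤ c := by exact_mod_cast hc
  have hkcq : 2 * (k : ℚ) = (m + 1) * c := by exact_mod_cast hkc
  have hσq : (σ 1 k : ℚ) = c * m := by exact_mod_cast hσ
  have hk0 : (k : ℚ) ≠ 0 := Nat.cast_ne_zero.mpr (by omega)
  have hσk : (σ 1 k : ℚ) / k = 2 * m / (m + 1) := by
    rw [div_eq_div_iff hk0 (by positivity), hσq]
    linear_combination -(m : ℚ) * hkcq
  have hsk : ((m : ℚ) + 1) / k = 2 / c := by
    rw [div_eq_div_iff hk0 (by positivity)]
    linear_combination -hkcq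
  have hσm : (σ 1 k : ℚ) / m = c := by
    rw [hσq, mul_div_assoc, div_self (by positivity), mul_one]
  rw [hσk, hsk, hσm]
  exact ⟨le_succ_div_add_two_mul_div_succ hm9, succ_div_add_two_mul_div_succ_lt_three (by linarith),
    le_two_div_add_self hc3⟩

theorem stmt_9 (k m : ℕ) (hk : 1 < k) (hm : 1 < m) (hodd : Odd (k * m))
    (hspoof : σ 1 k * (m + 1) = 2 * (k * m)) (hcomp : ¬ m.Prime) (hlt : m < k) :
    (131 : ℚ) / 45 ≤ ((m : ℚ) + 1) / (m : ℚ) + (σ 1 k : ℚ) / (k : ℚ) ∧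
      ((m : ℚ) + 1) / (m : ℚ) + (σ 1 k : ℚ) / (k : ℚ) < 3 ∧
      (11 : ℚ) / 3 ≤ ((m : ℚ) + 1) / (k : ℚ) + (σ 1 k : ℚ) / (m : ℚ) :=
  stmt_9_general k m hm hodd hspoof hcomp hlt
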